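/- Let α ∈ (0,1] and let V ∈ C²(ℝ) be a symmetric function (V(x) = V(−x) for all x ∈ ℝ) such that e^{−V} ∈ L¹(ℝ; dx) ∩ C_b²(ℝ), and suppose that limsup_{|x|→∞} |x|³ e^{−V(x)} |V'(x)² − V''(x)| < ∞. Then: (i) ∫₀^∞ (−Δ)^{α/2} e^{−V(u)} du = 0; (ii) b(0) = 0 and b(−x) = −b(x) for all x ∈ ℝ; (iii) b(x) = e^{V(x)} ∫_x^∞ (−Δ)^{α/2} e^{−V(z)} dz for all x ≥ 0 and b(x) = −e^{V(x)} ∫_{−x}^∞ (−Δ)^{α/2} e^{−V(z)} dz for all x < 0; (iv) b ∈ C¹(ℝ). -/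

import Mathlib

open MeasureTheory Real Filter

/-- The constant `c_{1,α} = 2^α Γ((1+α)/2)/(π^{1/2} |Γ(-α/2)|)`. -/
noncomputable def fracC (α : ℝ) : ℝ :=
  2 ^ α * Real.Gamma ((1 + α) / 2) / (Real.pi ^ ((1 : ℝ) / 2) * |Real.Gamma (-α / 2)|)

/-- The one-dimensional fractional Laplacian `(-Δ)^{α/2} g`, defined so that
`-(-Δ)^{α/2} g (x) = c_{1,α} ∫ (g(x+z) - g(x) - g'(x) z 1_{|z|≤1}) |z|^{-(1+α)} dz`. -/
noncomputable def fracLap1 (α : ℝ) (g : ℝ → ℝ) (x : ℝ) : ℝ :=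
  -(fracC α *
    ∫ z : ℝ, (g (x + z) - g x - deriv g x * z * (if |z| ≤ 1 then 1 else 0)) * |z| ^ (-(1 + α)))

/-- The one-dimensional fractional drift
`b(x) = -e^{V(x)} ∫_{-∞}^x (-Δ)^{α/2} e^{-V(u)} du`. -/
noncomputable def fracDrift1 (α : ℝ) (V : ℝ → ℝ) (x : ℝ) : ℝ :=
  -Real.exp (V x) * ∫ u in Set.Iic x, fracLap1 α (fun y => Real.exp (-(V y))) u

/-!
Write `g = e^{-V}` and `L = (-Δ)^{α/2} g`. The growth condition on `V` makes `g''` decay like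
`(1 + x²)⁻¹`, so the compensated increment `g(u+z) - g(u) - g'(u) z 𝟙_{|z|≤1}` is bounded by
`C z² (1 + u²)⁻¹` for `|z| ≤ 1` and by `|g(u+z)| + |g(u)|` otherwise. Hence the kernel defining `L`
is integrable on `ℝ × ℝ`, and Fubini gives `∫ L = 0`, because for fixed `z` the increment
integrates to zero in `u` (translation invariance of `∫ g` and `∫ g' = 0`). Evenness of `V` makes
`L` even, so `∫_{-∞}^{-x} L = ∫_x^∞ L = -∫_{-∞}^x L`. Finally `L` is continuous by dominated
convergence, so `x ↦ ∫_{-∞}^x L` is `C¹`.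
-/

open Set

noncomputable def compensatedIncrement (g : ℝ → ℝ) (u z : ℝ) : ℝ :=
  g (u + z) - g u - deriv g u * z * (if |z| ≤ 1 then 1 else 0)

lemma fracLap1_eq (α : ℝ) (g : ℝ → ℝ) (u : ℝ) :
    fracLap1 α g u = -(fracC α * ∫ z, compensatedIncrement g u z * |z| ^ (-(1 + α))) :=
  rfl

section Increment

variable {g : ℝ → ℝ} {u z : ℝ}

lemma compensatedIncrement_of_abs_le_one (hz : |z| ≤ 1) :
    compensatedIncrement g u z = g (u + z) - g u - deriv g u * z := by
  simp [compensatedIncrement, hz]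

lemma compensatedIncrement_of_one_lt_abs (hz : 1 < |z|) :
    compensatedIncrement g u z = g (u + z) - g u := by
  simp [compensatedIncrement, hz.not_ge]

lemma abs_sub_sub_deriv_mul_le {B : ℝ} (hg : ContDiff ℝ 2 g)
    (hB : ∀ x ∈ Icc (u - |z|) (u + |z|), |deriv (deriv g) x| ≤ B) :
    |g (u + z) - g u - deriv g u * z| ≤ B * z ^ 2 := by
  have hg' : ContDiff ℝ 1 (deriv g) := hg.iterate_deriv' 1 1
  have hu : u ∈ Icc (u - |z|) (u + |z|) := ⟨by linarith [abs_nonneg z], by linarith [abs_nonneg z]⟩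
  have huz : u + z ∈ Icc (u - |z|) (u + |z|) :=
    ⟨by linarith [neg_abs_le z], by linarith [le_abs_self z]⟩
  have hderiv : ∀ x ∈ Icc (u - |z|) (u + |z|), |deriv g x - deriv g u| ≤ B * |z| := by
    intro x hx
    calc |deriv g x - deriv g u| ≤ B * |x - u| :=
          (convex_Icc _ _).norm_image_sub_le_of_norm_deriv_le
            (fun y _ => hg'.differentiable one_ne_zero y) hB hu hx
      _ ≤ B * |z| := mul_le_mul_of_nonneg_left
          (abs_sub_le_iff.2 ⟨by linarith [hx.2], by linarith [hx.1]⟩)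
          ((abs_nonneg _).trans (hB u hu))
  have hline : ∀ x ∈ Icc (u - |z|) (u + |z|), HasDerivWithinAt
      (fun y => g y - deriv g u * y) (deriv g x - deriv g u) (Icc (u - |z|) (u + |z|)) x :=
    fun x _ => (((hg.differentiable two_ne_zero x).hasDerivAt).sub
      ((hasDerivAt_id x).const_mul _)).hasDerivWithinAt.congr_deriv (by simp)
  calc |g (u + z) - g u - deriv g u * z|
      = |(g (u + z) - deriv g u * (u + z)) - (g u - deriv g u * u)| := by ring_nf
    _ ≤ B * |z| * |u + z - u| :=
        (convex_Icc _ _).norm_image_sub_le_of_norm_hasDerivWithin_le hline hderiv hu huz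
    _ = B * z ^ 2 := by rw [add_sub_cancel_left, mul_assoc, ← abs_mul, abs_mul_self, sq]

lemma abs_compensatedIncrement_le_of_abs_le_one {B : ℝ} (hg : ContDiff ℝ 2 g) (hz : |z| ≤ 1)
    (hB : ∀ x ∈ Icc (u - |z|) (u + |z|), |deriv (deriv g) x| ≤ B) :
    |compensatedIncrement g u z| ≤ B * z ^ 2 := by
  rw [compensatedIncrement_of_abs_le_one hz]
  exact abs_sub_sub_deriv_mul_le hg hB

lemma abs_compensatedIncrement_le_of_one_lt_abs (hz : 1 < |z|) :
    |compensatedIncrement g u z| ≤ |g (u + z)| + |g u| := by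
  rw [compensatedIncrement_of_one_lt_abs hz]
  exact abs_sub _ _

lemma continuous_compensatedIncrement (hg : ContDiff ℝ 2 g) (z : ℝ) :
    Continuous fun u => compensatedIncrement g u z := by
  have hg0 := hg.continuous
  have hg1 := hg.continuous_deriv one_le_two
  unfold compensatedIncrement
  fun_prop

lemma measurable_uncurry_compensatedIncrement (hg : ContDiff ℝ 2 g) :
    Measurable (Function.uncurry (compensatedIncrement g)) := by
  have hind : Measurable fun z : ℝ => if |z| ≤ 1 then (1 : ℝ) else 0 :=
    Measurable.ite (measurableSet_le measurable_abs measurable_const) measurable_const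
      measurable_const
  exact ((hg.continuous.measurable.comp measurable_add).sub
    (hg.continuous.measurable.comp measurable_fst)).sub
    ((((hg.continuous_deriv one_le_two).measurable.comp measurable_fst).mul measurable_snd).mul
      (hind.comp measurable_snd))

end Increment

lemma inv_one_add_sq_le_three_mul {x u : ℝ} (h : |x - u| ≤ 1) :
    (1 + x ^ 2)⁻¹ ≤ 3 * (1 + u ^ 2)⁻¹ := by
  rw [← div_eq_mul_inv, le_div_iff₀ (by positivity), inv_mul_le_iff₀ (by positivity)]
  nlinarith [abs_le.1 h, sq_nonneg (x + (x - u))]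

lemma integrable_of_integrableOn_Ioi_of_even {E : Type*} [NormedAddCommGroup E] {f : ℝ → E}
    (hf : IntegrableOn f (Ioi 0)) (heven : ∀ x, f (-x) = f x) : Integrable f := by
  have hIio : IntegrableOn f (Iio 0) := by
    rw [← Measure.map_neg_eq_self (volume : Measure ℝ),
      measurableEmbedding_neg.integrableOn_map_iff, Set.neg_preimage, Set.neg_Iio, neg_zero]
    simpa only [Function.comp_def, heven] using hf
  rw [← integrableOn_univ, ← Iio_union_Ici (a := (0 : ℝ))]
  exact hIio.union ((integrableOn_Ici_iff_integrableOn_Ioi).2 hf)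

lemma integrable_ite_sq_mul_abs_rpow {α : ℝ} (hα0 : 0 < α) (hα2 : α < 2) (A B : ℝ) :
    Integrable fun z : ℝ => (if |z| ≤ 1 then A * z ^ 2 else B) * |z| ^ (-(1 + α)) := by
  refine integrable_of_integrableOn_Ioi_of_even ?_ (fun z => by simp only [abs_neg, neg_sq])
  rw [← Ioc_union_Ioi_eq_Ioi zero_le_one]
  refine IntegrableOn.union ?_ ?_
  · have hpow : IntegrableOn (fun z : ℝ => A * z ^ (1 - α)) (Ioc 0 1) :=
      ((intervalIntegrable_iff_integrableOn_Ioc_of_le zero_le_one).1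
        (intervalIntegral.intervalIntegrable_rpow' (by linarith))).const_mul A
    refine hpow.congr_fun (fun z hz => ?_) measurableSet_Ioc
    have hz0 : 0 < z := hz.1
    rw [abs_of_pos hz0, if_pos hz.2, mul_assoc, ← Real.rpow_natCast, ← Real.rpow_add hz0,
      show ((2 : ℕ) : ℝ) + -(1 + α) = 1 - α by push_cast; ring]
  · have hpow : IntegrableOn (fun z : ℝ => B * z ^ (-(1 + α))) (Ioi 1) :=
      (integrableOn_Ioi_rpow_of_lt (by linarith) one_pos).const_mul B
    refine hpow.congr_fun (fun z hz => ?_) measurableSet_Ioi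
    have hz1 : 1 < z := hz
    rw [abs_of_pos (one_pos.trans hz1), if_neg hz1.not_ge]

section Decay

variable {α C : ℝ} {g : ℝ → ℝ}

lemma abs_compensatedIncrement_le_of_decay (hg : ContDiff ℝ 2 g)
    (hC : ∀ x, |deriv (deriv g) x| ≤ C * (1 + x ^ 2)⁻¹) (u z : ℝ) :
    |compensatedIncrement g u z| ≤
      if |z| ≤ 1 then 3 * C * z ^ 2 * (1 + u ^ 2)⁻¹ else |g (u + z)| + |g u| := by
  split_ifs with hz
  · refine (abs_compensatedIncrement_le_of_abs_le_one (B := C * (3 * (1 + u ^ 2)⁻¹)) hg hz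
      fun x hx => ?_).trans_eq (by ring)
    refine (hC x).trans (mul_le_mul_of_nonneg_left (inv_one_add_sq_le_three_mul ?_)
      (nonneg_of_mul_nonneg_left ((abs_nonneg _).trans (hC x)) (by positivity)))
    exact abs_sub_le_iff.2 ⟨by linarith [hx.2], by linarith [hx.1]⟩
  · exact abs_compensatedIncrement_le_of_one_lt_abs (not_le.1 hz)

lemma integrable_compensatedIncrement_bound (hgi : Integrable g) (z : ℝ) :
    Integrable fun u =>
      if |z| ≤ 1 then 3 * C * z ^ 2 * (1 + u ^ 2)⁻¹ else |g (u + z)| + |g u| := by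
  split_ifs
  · exact integrable_inv_one_add_sq.const_mul _
  · exact (hgi.comp_add_right z).abs.add hgi.abs

lemma integral_compensatedIncrement_bound (hgi : Integrable g) (z : ℝ) :
    ∫ u, (if |z| ≤ 1 then 3 * C * z ^ 2 * (1 + u ^ 2)⁻¹ else |g (u + z)| + |g u|) =
      if |z| ≤ 1 then 3 * C * π * z ^ 2 else 2 * ∫ u, |g u| := by
  split_ifs
  · rw [integral_const_mul, integral_univ_inv_one_add_sq]
    ring
  · rw [integral_add (hgi.comp_add_right z).abs hgi.abs,
      integral_add_right_eq_self (fun u => |g u|) z]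
    ring

lemma integrable_compensatedIncrement (hg : ContDiff ℝ 2 g) (hgi : Integrable g)
    (hC : ∀ x, |deriv (deriv g) x| ≤ C * (1 + x ^ 2)⁻¹) (z : ℝ) :
    Integrable fun u => compensatedIncrement g u z :=
  (integrable_compensatedIncrement_bound hgi z).mono'
    (continuous_compensatedIncrement hg z).aestronglyMeasurable
    (ae_of_all _ fun u => abs_compensatedIncrement_le_of_decay hg hC u z)

lemma integral_abs_compensatedIncrement_le (hg : ContDiff ℝ 2 g) (hgi : Integrable g)
    (hC : ∀ x, |deriv (deriv g) x| ≤ C * (1 + x ^ 2)⁻¹) (z : ℝ) :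
    ∫ u, |compensatedIncrement g u z| ≤
      if |z| ≤ 1 then 3 * C * π * z ^ 2 else 2 * ∫ u, |g u| :=
  (integral_mono (integrable_compensatedIncrement hg hgi hC z).abs
    (integrable_compensatedIncrement_bound hgi z)
    fun u => abs_compensatedIncrement_le_of_decay hg hC u z).trans_eq
    (integral_compensatedIncrement_bound hgi z)

lemma integrable_compensatedIncrement_mul_rpow (hα0 : 0 < α) (hα2 : α < 2)
    (hg : ContDiff ℝ 2 g) (hgi : Integrable g)
    (hC : ∀ x, |deriv (deriv g) x| ≤ C * (1 + x ^ 2)⁻¹) :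
    Integrable (fun p : ℝ × ℝ => compensatedIncrement g p.1 p.2 * |p.2| ^ (-(1 + α)))
      (volume.prod volume) := by
  have hmeas : Measurable fun p : ℝ × ℝ => compensatedIncrement g p.1 p.2 * |p.2| ^ (-(1 + α)) :=
    (measurable_uncurry_compensatedIncrement hg).mul (by fun_prop)
  rw [integrable_prod_iff' hmeas.aestronglyMeasurable]
  refine ⟨ae_of_all _ fun z => (integrable_compensatedIncrement hg hgi hC z).mul_const
    (|z| ^ (-(1 + α))), ?_⟩
  refine (integrable_ite_sq_mul_abs_rpow hα0 hα2 (3 * C * π) (2 * ∫ u, |g u|)).mono'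
    hmeas.norm.stronglyMeasurable.integral_prod_left'.aestronglyMeasurable
    (ae_of_all _ fun z => ?_)
  have hw : 0 ≤ |z| ^ (-(1 + α)) := Real.rpow_nonneg (abs_nonneg z) _
  simp only [norm_mul, Real.norm_eq_abs, abs_of_nonneg hw, integral_mul_const]
  rw [abs_of_nonneg (integral_nonneg fun _ => abs_nonneg _)]
  exact mul_le_mul_of_nonneg_right (integral_abs_compensatedIncrement_le hg hgi hC z) hw

lemma integrable_deriv_of_decay (hg : ContDiff ℝ 2 g) (hgi : Integrable g)
    (hC : ∀ x, |deriv (deriv g) x| ≤ C * (1 + x ^ 2)⁻¹) : Integrable (deriv g) := by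
  have h : deriv g = fun u => g (u + 1) - g u - compensatedIncrement g u 1 := by
    ext u
    rw [compensatedIncrement_of_abs_le_one (by norm_num)]
    ring
  rw [h]
  exact ((hgi.comp_add_right 1).sub hgi).sub (integrable_compensatedIncrement hg hgi hC 1)

lemma integral_compensatedIncrement_eq_zero (hg : ContDiff ℝ 2 g) (hgi : Integrable g)
    (hC : ∀ x, |deriv (deriv g) x| ≤ C * (1 + x ^ 2)⁻¹) (z : ℝ) :
    ∫ u, compensatedIncrement g u z = 0 := by
  have hg' := integrable_deriv_of_decay hg hgi hC
  have hdiff : Integrable fun u => g (u + z) - g u := (hgi.comp_add_right z).sub hgi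
  have hderiv : ∫ u, deriv g u = 0 := integral_eq_zero_of_hasDerivAt_of_integrable
    (fun u => (hg.differentiable two_ne_zero u).hasDerivAt) hg' hgi
  unfold compensatedIncrement
  rw [integral_sub hdiff ((hg'.mul_const z).mul_const (if |z| ≤ 1 then (1 : ℝ) else 0)),
    integral_sub (hgi.comp_add_right z) hgi, integral_add_right_eq_self g z, integral_mul_const,
    integral_mul_const, hderiv]
  ring

lemma integrable_fracLap1 (hα0 : 0 < α) (hα2 : α < 2) (hg : ContDiff ℝ 2 g)
    (hgi : Integrable g) (hC : ∀ x, |deriv (deriv g) x| ≤ C * (1 + x ^ 2)⁻¹) :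
    Integrable (fracLap1 α g) :=
  ((integrable_compensatedIncrement_mul_rpow hα0 hα2 hg hgi hC).integral_prod_left.const_mul
    _).neg

lemma integral_fracLap1_eq_zero (hα0 : 0 < α) (hα2 : α < 2) (hg : ContDiff ℝ 2 g)
    (hgi : Integrable g) (hC : ∀ x, |deriv (deriv g) x| ≤ C * (1 + x ^ 2)⁻¹) :
    ∫ u, fracLap1 α g u = 0 := by
  simp_rw [fracLap1_eq]
  rw [integral_neg, integral_const_mul, integral_integral_swap
    (integrable_compensatedIncrement_mul_rpow hα0 hα2 hg hgi hC)]
  simp [integral_mul_const, integral_compensatedIncrement_eq_zero hg hgi hC]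

end Decay

lemma continuous_fracLap1 {α M : ℝ} {g : ℝ → ℝ} (hα0 : 0 < α) (hα2 : α < 2)
    (hg : ContDiff ℝ 2 g) (hgM : ∀ x, |g x| ≤ M) (hg''M : ∀ x, |deriv (deriv g) x| ≤ M) :
    Continuous (fracLap1 α g) := by
  have hbound : ∀ u z, ‖compensatedIncrement g u z * |z| ^ (-(1 + α))‖ ≤
      (if |z| ≤ 1 then M * z ^ 2 else 2 * M) * |z| ^ (-(1 + α)) := by
    intro u z
    have hw : 0 ≤ |z| ^ (-(1 + α)) := Real.rpow_nonneg (abs_nonneg z) _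
    rw [norm_mul, Real.norm_eq_abs, Real.norm_eq_abs, abs_of_nonneg hw]
    refine mul_le_mul_of_nonneg_right ?_ hw
    split_ifs with hz
    · exact abs_compensatedIncrement_le_of_abs_le_one hg hz fun x _ => hg''M x
    · exact (abs_compensatedIncrement_le_of_one_lt_abs (not_le.1 hz)).trans
        (by linarith [hgM (u + z), hgM u])
  have hint : Continuous fun u => ∫ z, compensatedIncrement g u z * |z| ^ (-(1 + α)) :=
    continuous_of_dominated
      (fun u => ((measurable_uncurry_compensatedIncrement hg).comp
        measurable_prodMk_left |>.mul (by fun_prop)).aestronglyMeasurable)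
      (fun u => ae_of_all _ (hbound u)) (integrable_ite_sq_mul_abs_rpow hα0 hα2 M (2 * M))
      (ae_of_all _ fun z => (continuous_compensatedIncrement hg z).mul continuous_const)
  exact (continuous_const.mul hint).neg

lemma deriv_neg_of_even {g : ℝ → ℝ} (heven : ∀ x, g (-x) = g x) (x : ℝ) :
    deriv g (-x) = -deriv g x := by
  simpa only [heven, neg_neg] using deriv_comp_neg (f := g) (x := -x)

lemma fracLap1_neg {α : ℝ} {g : ℝ → ℝ} (heven : ∀ x, g (-x) = g x) (u : ℝ) :
    fracLap1 α g (-u) = fracLap1 α g u := by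
  have hker : ∀ z, compensatedIncrement g (-u) (-z) = compensatedIncrement g u z := by
    intro z
    simp only [compensatedIncrement, ← neg_add, heven, deriv_neg_of_even heven, abs_neg]
    ring
  rw [fracLap1_eq, fracLap1_eq, ← integral_neg_eq_self]
  simp only [hker, abs_neg]

section SetIntegralIic

variable {L : ℝ → ℝ}

lemma setIntegral_Iic_eq_neg_setIntegral_Ioi (hL : Integrable L) (h0 : ∫ u, L u = 0) (x : ℝ) :
    ∫ u in Iic x, L u = -∫ u in Ioi x, L u := by
  linarith [intervalIntegral.integral_Iic_add_Ioi (b := x) hL.integrableOn hL.integrableOn]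

lemma setIntegral_Iic_neg_of_even (heven : ∀ u, L (-u) = L u) (x : ℝ) :
    ∫ u in Iic (-x), L u = ∫ u in Ioi x, L u := by
  simpa only [heven, neg_neg] using integral_comp_neg_Iic (-x) L

lemma hasDerivAt_setIntegral_Iic (hL : Integrable L) (hLc : Continuous L) (x : ℝ) :
    HasDerivAt (fun y => ∫ u in Iic y, L u) (L x) x := by
  have h : (fun y => ∫ u in Iic y, L u) = fun y => (∫ u in Iic 0, L u) + ∫ u in (0)..y, L u := by
    ext y
    rw [← intervalIntegral.integral_Iic_sub_Iic hL.integrableOn hL.integrableOn]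
    ring
  rw [h]
  exact (hLc.integral_hasStrictDerivAt 0 x).hasDerivAt.const_add _

lemma contDiff_one_setIntegral_Iic (hL : Integrable L) (hLc : Continuous L) :
    ContDiff ℝ 1 fun y => ∫ u in Iic y, L u := by
  refine contDiff_one_iff_deriv.2
    ⟨fun x => (hasDerivAt_setIntegral_Iic hL hLc x).differentiableAt, ?_⟩
  rwa [funext fun x => (hasDerivAt_setIntegral_Iic hL hLc x).deriv]

end SetIntegralIic

lemma exists_abs_le_mul_inv_one_add_sq {f : ℝ → ℝ} {M K R : ℝ} {n : ℕ} (hn : 2 ≤ n)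
    (hM : ∀ x, |f x| ≤ M) (hK : ∀ x, R ≤ |x| → |x| ^ n * |f x| ≤ K) :
    ∃ C, ∀ x, |f x| ≤ C * (1 + x ^ 2)⁻¹ := by
  set R' := max R 1
  refine ⟨max (M * (1 + R' ^ 2)) (2 * K), fun x => ?_⟩
  rw [← div_eq_mul_inv, le_div_iff₀ (by positivity)]
  rcases le_or_gt |x| R' with hx | hx
  · have hx2 : x ^ 2 ≤ R' ^ 2 := sq_le_sq' (abs_le.1 hx).1 (abs_le.1 hx).2
    exact (mul_le_mul (hM x) (by linarith) (by positivity) ((abs_nonneg _).trans (hM x))).trans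
      (le_max_left _ _)
  · have hx1 : 1 ≤ |x| := (le_max_right R 1).trans hx.le
    have hxn : 1 + x ^ 2 ≤ 2 * |x| ^ n := by
      have := pow_le_pow_right₀ hx1 hn
      rw [← sq_abs]
      linarith [one_le_pow₀ (n := n) hx1]
    calc |f x| * (1 + x ^ 2) ≤ |f x| * (2 * |x| ^ n) := by gcongr
      _ = 2 * (|x| ^ n * |f x|) := by ring
      _ ≤ 2 * K := by linarith [hK x ((le_max_left R 1).trans hx.le)]
      _ ≤ _ := le_max_right _ _

lemma hasDerivAt_exp_neg {V : ℝ → ℝ} {x : ℝ} (hV : DifferentiableAt ℝ V x) :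
    HasDerivAt (fun y => exp (-(V y))) (-deriv V x * exp (-(V x))) x := by
  simpa only [mul_neg, neg_mul, mul_comm] using hV.hasDerivAt.fun_neg.exp

lemma deriv_deriv_exp_neg {V : ℝ → ℝ} (hV : ContDiff ℝ 2 V) (x : ℝ) :
    deriv (deriv fun y => exp (-(V y))) x =
      (deriv V x ^ 2 - deriv (deriv V) x) * exp (-(V x)) := by
  have hV1 : Differentiable ℝ V := hV.differentiable two_ne_zero
  have hV2 : Differentiable ℝ (deriv V) := (hV.iterate_deriv' 1 1).differentiable one_ne_zero
  rw [funext fun y => (hasDerivAt_exp_neg (hV1 y)).deriv,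
    ((hV2 x).hasDerivAt.fun_neg.fun_mul (hasDerivAt_exp_neg (hV1 x))).deriv]
  ring

theorem stmt_12 (α : ℝ) (hα : α ∈ Set.Ioc (0 : ℝ) 1)
    (V : ℝ → ℝ) (hV : ContDiff ℝ 2 V)
    (hsym : ∀ x : ℝ, V x = V (-x))
    (hL1 : Integrable (fun x => Real.exp (-(V x))))
    (hCb2 : ∃ M : ℝ, ∀ x : ℝ, Real.exp (-(V x)) ≤ M ∧
      |deriv (fun y => Real.exp (-(V y))) x| ≤ M ∧
      |deriv (deriv (fun y => Real.exp (-(V y)))) x| ≤ M)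
    (hlim : ∃ M R : ℝ, ∀ x : ℝ, R ≤ |x| →
      |x| ^ 3 * Real.exp (-(V x)) * |(deriv V x) ^ 2 - deriv (deriv V) x| ≤ M) :
    (∫ u in Set.Ioi (0 : ℝ), fracLap1 α (fun y => Real.exp (-(V y))) u = 0) ∧
    (fracDrift1 α V 0 = 0 ∧ ∀ x : ℝ, fracDrift1 α V (-x) = -fracDrift1 α V x) ∧
    ((∀ x : ℝ, 0 ≤ x → fracDrift1 α V x =
        Real.exp (V x) * ∫ z in Set.Ioi x, fracLap1 α (fun y => Real.exp (-(V y))) z) ∧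
      (∀ x : ℝ, x < 0 → fracDrift1 α V x =
        -Real.exp (V x) * ∫ z in Set.Ioi (-x), fracLap1 α (fun y => Real.exp (-(V y))) z)) ∧
    ContDiff ℝ 1 (fracDrift1 α V) := by
  obtain ⟨hα0, hα2⟩ : 0 < α ∧ α < 2 := ⟨hα.1, by linarith [hα.2]⟩
  obtain ⟨M, hM⟩ := hCb2
  obtain ⟨K, R, hK⟩ := hlim
  set g : ℝ → ℝ := fun y => exp (-(V y))
  have hg : ContDiff ℝ 2 g := hV.neg.exp
  have hgM : ∀ x, |g x| ≤ M := fun x => (abs_of_pos (exp_pos _)).trans_le (hM x).1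
  obtain ⟨C, hC⟩ := exists_abs_le_mul_inv_one_add_sq (K := K) (R := R) (n := 3) (by norm_num)
    (fun x => (hM x).2.2) fun x hx => by
      rw [deriv_deriv_exp_neg hV, abs_mul, abs_of_pos (exp_pos _)]
      linarith [hK x hx]
  have hL := integrable_fracLap1 hα0 hα2 hg hL1 hC
  have hIic := setIntegral_Iic_eq_neg_setIntegral_Ioi hL
    (integral_fracLap1_eq_zero hα0 hα2 hg hL1 hC)
  have hrefl := setIntegral_Iic_neg_of_even (fracLap1_neg (α := α) (g := g) fun x =>
    show exp (-(V (-x))) = exp (-(V x)) by rw [← hsym x])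
  have hIoi0 : ∫ u in Ioi 0, fracLap1 α g u = 0 := by
    have h := hrefl 0
    rw [neg_zero] at h
    linarith [hIic 0]
  refine ⟨hIoi0, ⟨?_, fun x => ?_⟩, ⟨fun x _ => ?_, fun x _ => ?_⟩, ?_⟩
  · rw [fracDrift1, hIic, hIoi0]
    ring
  · rw [fracDrift1, fracDrift1, ← hsym, hrefl, hIic]
    ring
  · rw [fracDrift1, hIic]
    ring
  · rw [fracDrift1, ← hrefl, neg_neg]
  · exact ((hV.of_le one_le_two).exp.neg).mul
      (contDiff_one_setIntegral_Iic hL (continuous_fracLap1 hα0 hα2 hg hgM fun x => (hM x).2.2))
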